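/- For every real number t > 0, the number 8t belongs to E(t), and every element e of E(t) with e ∉ {γ₁(t), γ₂(t), γ₃(t)} satisfies e ≥ 8t. -/

import Mathlib

/-!
`8t = β₂(t)`, and every member of the three families from `γ₄`, `α₃`, `β₂` on is at least `8t`,
since `t⁻³ ≥ 0` may be dropped. The only remaining element, `α₁(t) = 2t + t⁻²`, equals `γ₁(t)`.
-/

/-- `γ_n(t) = t·n·(2 + n·t⁻³)` -/
noncomputable def gammaF (t : ℝ) (n : ℕ) : ℝ := t * n * (2 + n * (t ^ 3)⁻¹)

/-- `α_k(t) = t·(k(k+2) − 1 + t⁻³)` -/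
noncomputable def alphaF (t : ℝ) (k : ℕ) : ℝ := t * (k * (k + 2) - 1 + (t ^ 3)⁻¹)

/-- `β_l(t) = t·l·(l+2)` -/
noncomputable def betaF (t : ℝ) (l : ℕ) : ℝ := t * l * (l + 2)

/-- The set `E(t)` of nonzero eigenvalues of the unit-volume Berger sphere Laplacian. -/
def EV (t : ℝ) : Set ℝ :=
  {x | ∃ n : ℕ, 1 ≤ n ∧ x = gammaF t n} ∪
  {x | ∃ k : ℕ, Odd k ∧ 1 ≤ k ∧ x = alphaF t k} ∪
  {x | ∃ l : ℕ, Even l ∧ 2 ≤ l ∧ x = betaF t l}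

section Bounds

variable {t : ℝ}

theorem betaF_two (t : ℝ) : betaF t 2 = 8 * t := by
  norm_num [betaF]
  ring

theorem alphaF_one (t : ℝ) : alphaF t 1 = gammaF t 1 := by
  norm_num [alphaF, gammaF]

theorem eight_mul_le_gammaF (ht : 0 ≤ t) {n : ℕ} (hn : 4 ≤ n) : 8 * t ≤ gammaF t n := by
  have hn' : (4 : ℝ) ≤ n := by exact_mod_cast hn
  have hsq : 0 ≤ t * n * (n * (t ^ 3)⁻¹) := by positivity
  calc 8 * t ≤ 2 * t * n := by nlinarith
    _ ≤ gammaF t n := by unfold gammaF; linarith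

theorem eight_mul_le_alphaF (ht : 0 ≤ t) {k : ℕ} (hk : 3 ≤ k) : 8 * t ≤ alphaF t k := by
  have hk' : (3 : ℝ) ≤ k := by exact_mod_cast hk
  have hinv : 0 ≤ (t ^ 3)⁻¹ := by positivity
  have hquad : (8 : ℝ) ≤ k * (k + 2) - 1 := by nlinarith
  calc 8 * t = t * 8 := by ring
    _ ≤ t * (k * (k + 2) - 1 + (t ^ 3)⁻¹) := by gcongr; linarith
    _ = alphaF t k := rfl

theorem eight_mul_le_betaF (ht : 0 ≤ t) {l : ℕ} (hl : 2 ≤ l) : 8 * t ≤ betaF t l := by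
  have hl' : (2 : ℝ) ≤ l := by exact_mod_cast hl
  calc 8 * t = t * (2 * (2 + 2)) := by ring
    _ ≤ t * (l * (l + 2)) := by gcongr
    _ = betaF t l := by unfold betaF; ring

end Bounds

theorem berger_lambda4 (t : ℝ) (ht : 0 < t) :
    8 * t ∈ EV t ∧
      ∀ e ∈ EV t, e ∉ ({gammaF t 1, gammaF t 2, gammaF t 3} : Set ℝ) → 8 * t ≤ e := by
  refine ⟨Or.inr ⟨2, even_two, le_rfl, (betaF_two t).symm⟩, ?_⟩
  rintro e ((⟨n, hn, rfl⟩ | ⟨k, hk, -, rfl⟩) | ⟨l, -, hl, rfl⟩) hne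
  · have hn4 : 4 ≤ n := by
      by_contra! h
      interval_cases n <;> simp at hne
    exact eight_mul_le_gammaF ht.le hn4
  · have hk3 : 3 ≤ k := by
      obtain ⟨m, rfl⟩ := hk
      rcases m with _ | m
      · exact absurd (Or.inl (by simpa using alphaF_one t)) hne
      · omega
    exact eight_mul_le_alphaF ht.le hk3
  · exact eight_mul_le_betaF ht.le hl
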